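/- arXiv:0803.0427 — 2 statements merged into one kernel-verified Lean document; each statement's English description precedes it below -/
import Mathlib

section
/- If φ is a (1,1)-tensor field on a manifold M satisfying φ³ + φ = 0, then the restriction of φ to the subbundle Im φ squares to minus the identity, so the tangent bundle splits as the direct sum TM = Im φ ⊕ ker φ, and the rank of φ is even. -/
/-- If `φ` is a (1,1)-tensor field with `φ³ + φ = 0`, then the
restriction of `φ` to `Im φ` squares to minus the identity, the tangent space
splits as `TM = Im φ ⊕ ker φ`, and the rank of `φ` is even.
(Formalized pointwise, on each tangent space `V`.) -/
theorem f_structure_splitting {V : Type*} [AddCommGroup V] [Module ℝ V]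
    [FiniteDimensional ℝ V] (φ : V →ₗ[ℝ] V)
    (hφ : ∀ x, φ (φ (φ x)) + φ x = 0) :
    (∀ x ∈ LinearMap.range φ, φ (φ x) = -x) ∧
    IsCompl (LinearMap.range φ) (LinearMap.ker φ) ∧
    Even (Module.finrank ℝ (LinearMap.range φ)) := by
  have h1 : ∀ x ∈ LinearMap.range φ, φ (φ x) = -x := by
    rintro x ⟨y, rfl⟩
    exact eq_neg_of_add_eq_zero_left (hφ y)
  refine ⟨h1, ⟨?_, ?_⟩, ?_⟩
  · rw [disjoint_iff_inf_le]
    rintro x ⟨hx1, hx2⟩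
    simp only [SetLike.mem_coe, LinearMap.mem_ker] at hx2
    have := h1 x hx1
    rw [hx2, map_zero] at this
    simpa using this.symm
  · rw [codisjoint_iff, eq_top_iff]
    intro x _
    refine Submodule.mem_sup.mpr ⟨-φ (φ x), ⟨-(φ x), by simp⟩, x + φ (φ x), ?_, by abel⟩
    simp only [LinearMap.mem_ker, map_add]
    have := hφ x
    rw [add_comm] at this
    simpa using this
  · set W := LinearMap.range φ
    set J : W →ₗ[ℝ] W := φ.restrict (fun x _ => LinearMap.mem_range_self φ x) with hJdef
    have hJ2 : J * J = -1 := by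
      ext x
      have : φ (φ (x : V)) = -(x : V) := h1 x x.2
      simp [hJdef, LinearMap.restrict_apply, this]
    have hdet : (LinearMap.det J) ^ 2 = (-1 : ℝ) ^ (Module.finrank ℝ W) := by
      have h := congrArg LinearMap.det hJ2
      rw [map_mul] at h
      have : LinearMap.det (-1 : W →ₗ[ℝ] W) = (-1 : ℝ) ^ (Module.finrank ℝ W) := by
        have : (-1 : W →ₗ[ℝ] W) = (-1 : ℝ) • LinearMap.id := by
          ext x; simp
        rw [this, LinearMap.det_smul]
        simp
      rw [this] at h
      rw [sq]; exact h
    by_contra hodd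
    rw [Nat.not_even_iff_odd] at hodd
    rw [hodd.neg_one_pow] at hdet
    nlinarith [sq_nonneg (LinearMap.det J)]
end

section
/- Let (V, g) be a semi-Euclidean vector space and R, S two (0,4)-tensors on V each satisfying the curvature symmetries R(X,Y,Z,W) = −R(Y,X,Z,W) = −R(X,Y,W,Z), R(X,Y,Z,W) = R(Z,W,X,Y), and the first Bianchi identity (cyclic sum over Y,Z,W vanishes). If R(X,Y,X,Y) = S(X,Y,X,Y) for all linearly independent non-lightlike vectors X, Y, then R = S. -/
open Polynomial

private lemma quadFunZero (c0 c1 c2 : ℝ) (B : Set ℝ) (hB : B.Finite)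
    (h : ∀ t ∉ B, c0 + c1 * t + c2 * t ^ 2 = 0) : c0 = 0 := by
  set P : ℝ[X] := C c0 + C c1 * X + C c2 * X ^ 2 with hP
  have heval : ∀ t, P.eval t = c0 + c1 * t + c2 * t ^ 2 := by
    intro t; simp [hP]
  have hPzero : P = 0 := by
    by_contra hne
    have hfin : {t : ℝ | P.IsRoot t}.Finite := Polynomial.finite_setOf_isRoot hne
    have hsub : Bᶜ ⊆ {t : ℝ | P.IsRoot t} := by
      intro t ht
      simp only [Set.mem_setOf_eq, IsRoot, heval]
      exact h t ht
    exact (hB.infinite_compl) (hfin.subset hsub)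
  have h0 := heval 0
  rw [hPzero] at h0
  simpa using h0.symm

private lemma quadFunFinite (c0 c1 c2 : ℝ) (h2 : c2 ≠ 0) :
    {t : ℝ | c0 + c1 * t + c2 * t ^ 2 = 0}.Finite := by
  set P : ℝ[X] := C c0 + C c1 * X + C c2 * X ^ 2 with hP
  have hne : P ≠ 0 := by
    intro h
    have hc : P.coeff 2 = 0 := by rw [h]; simp
    have : c2 = 0 := by
      simpa [hP, coeff_add, coeff_C, coeff_C_mul, coeff_X, coeff_X_pow] using hc
    exact h2 this
  refine (Polynomial.finite_setOf_isRoot hne).subset ?_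
  intro t ht
  simp only [Set.mem_setOf_eq] at ht ⊢
  simp [IsRoot, hP, ht]

private lemma smul_factor {V : Type*} [AddCommGroup V] [Module ℝ V] {b : ℝ}
    (hb : b ≠ 0) {u v : V} {c : ℝ} (h : b • u = c • v) : ∃ e : ℝ, u = e • v :=
  ⟨b⁻¹ * c, by rw [mul_smul, ← h, smul_smul, inv_mul_cancel₀ hb, one_smul]⟩

/-- Let `(V, g)` be a semi-Euclidean vector space and `R`, `S`
two (0,4)-tensors satisfying the curvature symmetries and the first Bianchi
identity. If `R(X,Y,X,Y) = S(X,Y,X,Y)` for all linearly independent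
non-lightlike `X, Y`, then `R = S`. -/
theorem curvature_tensor_determined {V : Type*} [AddCommGroup V] [Module ℝ V]
    [FiniteDimensional ℝ V]
    (g : V →ₗ[ℝ] V →ₗ[ℝ] ℝ)
    (hsymm : ∀ X Y, g X Y = g Y X)
    (hnondeg : ∀ X, (∀ Y, g X Y = 0) → X = 0)
    (R S : V →ₗ[ℝ] V →ₗ[ℝ] V →ₗ[ℝ] V →ₗ[ℝ] ℝ)
    (hRa : ∀ X Y Z W, R X Y Z W = -R Y X Z W)
    (hRb : ∀ X Y Z W, R X Y Z W = -R X Y W Z)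
    (hRc : ∀ X Y Z W, R X Y Z W = R Z W X Y)
    (hRd : ∀ X Y Z W, R X Y Z W + R X Z W Y + R X W Y Z = 0)
    (hSa : ∀ X Y Z W, S X Y Z W = -S Y X Z W)
    (hSb : ∀ X Y Z W, S X Y Z W = -S X Y W Z)
    (hSc : ∀ X Y Z W, S X Y Z W = S Z W X Y)
    (hSd : ∀ X Y Z W, S X Y Z W + S X Z W Y + S X W Y Z = 0)
    (hRS : ∀ X Y : V, LinearIndependent ℝ ![X, Y] →
      g X X ≠ 0 → g Y Y ≠ 0 → R X Y X Y = S X Y X Y) :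
    R = S := by
  classical
  set T : V → V → V → V → ℝ := fun X Y Z W => R X Y Z W - S X Y Z W with hT
  have hTb : ∀ X Y Z W, T X Y Z W = -T X Y W Z := by
    intro X Y Z W; simp only [hT]
    have := hRb X Y Z W; have := hSb X Y Z W; linarith
  have hTc : ∀ X Y Z W, T X Y Z W = T Z W X Y := by
    intro X Y Z W; simp only [hT]
    have := hRc X Y Z W; have := hSc X Y Z W; linarith
  have hTd : ∀ X Y Z W, T X Y Z W + T X Z W Y + T X W Y Z = 0 := by
    intro X Y Z W; simp only [hT]
    have := hRd X Y Z W; have := hSd X Y Z W; linarith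
  have hT0 : ∀ X Y, LinearIndependent ℝ ![X, Y] → g X X ≠ 0 → g Y Y ≠ 0 →
      T X Y X Y = 0 := by
    intro X Y h1 h2 h3; simp only [hT]
    have := hRS X Y h1 h2 h3; linarith
  -- step 1: T X Y X Y = 0 for all X Y
  have hQ : ∀ X Y, T X Y X Y = 0 := by
    intro X Y
    by_cases hli : LinearIndependent ℝ ![X, Y]
    · have hX0 : X ≠ 0 := by
        have := hli.ne_zero 0; simpa using this
      obtain ⟨Z, hZZ⟩ : ∃ Z : V, g Z Z ≠ 0 := by
        by_contra h; push_neg at h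
        refine hX0 (hnondeg X ?_)
        intro B
        have h1 := h (X + B)
        have h2 := h X
        have h3 := h B
        have hsym := hsymm X B
        simp only [map_add, LinearMap.add_apply] at h1
        linarith
      -- inner step
      have inner : ∀ s : ℝ, g (X + s • Z) (X + s • Z) ≠ 0 →
          T (X + s • Z) Y (X + s • Z) Y = 0 := by
        intro s hv
        set v := X + s • Z with hvdef
        have hvne : v ≠ 0 := by
          intro h; rw [h] at hv; simp at hv
        have hdepfin : {t : ℝ | ¬ LinearIndependent ℝ ![v, Y + t • Z]}.Finite := by
          apply Set.Subsingleton.finite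
          intro t1 ht1 t2 ht2
          by_contra hne
          simp only [Set.mem_setOf_eq] at ht1 ht2
          have hc : ∀ t : ℝ, ¬ LinearIndependent ℝ ![v, Y + t • Z] →
              ∃ c : ℝ, Y + t • Z = c • v := by
            intro t hdep
            rw [LinearIndependent.pair_iff] at hdep
            push_neg at hdep
            obtain ⟨a, b, hab, hab2⟩ := hdep
            by_cases hb : b = 0
            · subst hb
              simp only [zero_smul, add_zero] at hab
              have ha : a ≠ 0 := fun h => hab2 h rfl
              exact absurd (by
                rcases smul_eq_zero.mp hab with h | h
                · exact absurd h ha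
                · exact h) hvne
            · have h1 : b • (Y + t • Z) = (-a) • v := by
                linear_combination (norm := module) hab
              exact smul_factor hb h1
          obtain ⟨c1, hc1⟩ := hc t1 ht1
          obtain ⟨c2, hc2⟩ := hc t2 ht2
          have h12 : (t1 - t2) • Z = (c1 - c2) • v := by
            linear_combination (norm := module) hc1 - hc2
          obtain ⟨d, hZv⟩ := smul_factor (sub_ne_zero.mpr hne) h12
          have hYv : Y = (c1 - t1 * d) • v := by
            linear_combination (norm := module) hc1 - t1 • hZv
          have hXv : X = (1 - s * d) • v := by
            linear_combination (norm := module) (-1 : ℝ) • hvdef - s • hZv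
          have hpair := LinearIndependent.pair_iff.mp hli
            (c1 - t1 * d) (-(1 - s * d))
          have hzero : (c1 - t1 * d) • X + (-(1 - s * d)) • Y = 0 := by
            rw [hXv, hYv]; module
          have := hpair hzero
          have hX00 : X = 0 := by
            rw [hXv]
            have h1 : (1 : ℝ) - s * d = 0 := by
              have := this.2; linarith
            rw [h1, zero_smul]
          exact hX0 hX00
        have hnullfin : {t : ℝ | g (Y + t • Z) (Y + t • Z) = 0}.Finite := by
          refine (quadFunFinite (g Y Y) (g Y Z + g Z Y) (g Z Z) hZZ).subset ?_
          intro t ht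
          simp only [Set.mem_setOf_eq] at ht ⊢
          have hexp : g (Y + t • Z) (Y + t • Z)
              = g Y Y + (g Y Z + g Z Y) * t + g Z Z * t ^ 2 := by
            simp only [map_add, map_smul, LinearMap.add_apply, LinearMap.smul_apply,
              smul_eq_mul]
            ring
          rw [← hexp]; exact ht
        have key : ∀ t ∉ ({t : ℝ | g (Y + t • Z) (Y + t • Z) = 0}
            ∪ {t : ℝ | ¬ LinearIndependent ℝ ![v, Y + t • Z]}),
            T v Y v Y + (T v Z v Y + T v Y v Z) * t + T v Z v Z * t ^ 2 = 0 := by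
          intro t ht
          simp only [Set.mem_union, Set.mem_setOf_eq, not_or, not_not] at ht
          have h1 := hT0 v (Y + t • Z) ht.2 hv ht.1
          have hexp : T v (Y + t • Z) v (Y + t • Z)
              = T v Y v Y + (T v Z v Y + T v Y v Z) * t + T v Z v Z * t ^ 2 := by
            simp only [hT, map_add, map_smul, LinearMap.add_apply, LinearMap.smul_apply,
              smul_eq_mul]
            ring
          rw [← hexp]; exact h1
        exact quadFunZero _ _ _ _ (hnullfin.union hdepfin) key
      -- outer step
      have houtfin : {s : ℝ | g (X + s • Z) (X + s • Z) = 0}.Finite := by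
        refine (quadFunFinite (g X X) (g X Z + g Z X) (g Z Z) hZZ).subset ?_
        intro s hs
        simp only [Set.mem_setOf_eq] at hs ⊢
        have hexp : g (X + s • Z) (X + s • Z)
            = g X X + (g X Z + g Z X) * s + g Z Z * s ^ 2 := by
          simp only [map_add, map_smul, LinearMap.add_apply, LinearMap.smul_apply,
            smul_eq_mul]
          ring
        rw [← hexp]; exact hs
      have keyo : ∀ s ∉ {s : ℝ | g (X + s • Z) (X + s • Z) = 0},
          T X Y X Y + (T Z Y X Y + T X Y Z Y) * s + T Z Y Z Y * s ^ 2 = 0 := by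
        intro s hs
        simp only [Set.mem_setOf_eq] at hs
        have h1 := inner s hs
        have hexp : T (X + s • Z) Y (X + s • Z) Y
            = T X Y X Y + (T Z Y X Y + T X Y Z Y) * s + T Z Y Z Y * s ^ 2 := by
          simp only [hT, map_add, map_smul, LinearMap.add_apply, LinearMap.smul_apply,
            smul_eq_mul]
          ring
        rw [← hexp]; exact h1
      exact quadFunZero _ _ _ _ houtfin keyo
    · -- dependent case
      rw [LinearIndependent.pair_iff] at hli
      push_neg at hli
      obtain ⟨a, b, hab, hab2⟩ := hli
      by_cases hb : b = 0
      · subst hb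
        simp only [zero_smul, add_zero] at hab
        have ha : a ≠ 0 := fun h => hab2 h rfl
        have hX : X = 0 := by
          rcases smul_eq_zero.mp hab with h | h
          · exact absurd h ha
          · exact h
        subst hX
        simp [hT]
      · have h1 : b • Y = (-a) • X := by
          linear_combination (norm := module) hab
        obtain ⟨c, hY⟩ := smul_factor hb h1
        have hRXX : R X X X X = 0 := by have := hRa X X X X; linarith
        have hSXX : S X X X X = 0 := by have := hSa X X X X; linarith
        rw [hY]
        simp only [hT, map_smul, LinearMap.smul_apply, smul_eq_mul, hRXX, hSXX]
        ring
  -- step 2: polarization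
  have h3 : ∀ X Y Z, T X Y Z Y = 0 := by
    intro X Y Z
    have h := hQ (X + Z) Y
    have hexp : T (X + Z) Y (X + Z) Y
        = T X Y X Y + T X Y Z Y + T Z Y X Y + T Z Y Z Y := by
      simp only [hT, map_add, LinearMap.add_apply]
      ring
    have hc' : T Z Y X Y = T X Y Z Y := by
      have := hTc Z Y X Y; linarith [hTc X Y Z Y]
    have h1 := hQ X Y
    have h2 := hQ Z Y
    rw [hexp] at h
    linarith
  have h4 : ∀ X Y Z W, T X Y Z W = -T X W Z Y := by
    intro X Y Z W
    have h := h3 X (Y + W) Z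
    have hexp : T X (Y + W) Z (Y + W)
        = T X Y Z Y + T X Y Z W + T X W Z Y + T X W Z W := by
      simp only [hT, map_add, LinearMap.add_apply]
      ring
    rw [hexp] at h
    have h1 := h3 X Y Z
    have h2 := h3 X W Z
    linarith
  have hfinal : ∀ X Y Z W, T X Y Z W = 0 := by
    intro X Y Z W
    have e1 : T X Z W Y = T X Y Z W := by
      have ha := h4 X Z W Y
      have hb := hTb X Y W Z
      have hc := hTb X Y Z W
      linarith
    have e2 : T X W Y Z = T X Y Z W := by
      have ha := h4 X W Y Z
      have hb := hTb X Z Y W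
      linarith
    have hd := hTd X Y Z W
    linarith
  apply LinearMap.ext; intro X
  apply LinearMap.ext; intro Y
  apply LinearMap.ext; intro Z
  apply LinearMap.ext; intro W
  have := hfinal X Y Z W
  simp only [hT] at this
  linarith
end
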